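/- arXiv:0812.1464 — 7 statements merged into one kernel-verified Lean document; each statement's English description precedes it below -/
import Mathlib

section
/- Under the isomorphism φ : G₁ → ker(s) ⋊ G₀ of a strict 2-group, the composition transported to ker(s) ⋊ G₀ is given by (k, g) ∘ (k', g') = (k·k', g') for composable pairs (i.e. when g = τ(k')·g' where τ = t restricted to ker s). -/
/-- Under `φ : G₁ ≅ ker s ⋊ G₀`, `φ(a) = (a·i(s a)⁻¹, s a)`, the composition of a
strict 2-group transports to `(k, g) ∘ (k', g') = (k·k', g')` for composable pairs,
i.e. when `g = t k' * g'`.  Stated in `G₁` via `φ⁻¹(k, g) = k * i g`: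
`(k * i g) ∘ (k' * i g') = (k * k') * i g'`. -/
theorem strict_two_group_comp_transported
    {G₀ G₁ : Type*} [Group G₀] [Group G₁]
    (s t : G₁ →* G₀) (i : G₀ →* G₁)
    (hsi : ∀ g, s (i g) = g) (hti : ∀ g, t (i g) = g)
    (comp : G₁ → G₁ → G₁)
    (hscomp : ∀ a b, s a = t b → s (comp a b) = s b)
    (htcomp : ∀ a b, s a = t b → t (comp a b) = t a)
    (hidr : ∀ a, comp a (i (s a)) = a)
    (hidl : ∀ a, comp (i (t a)) a = a)
    (hassoc : ∀ a b c, s a = t b → s b = t c → comp (comp a b) c = comp a (comp b c))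
    (hint : ∀ a a' b b', s a = t b → s a' = t b' →
      comp (a * a') (b * b') = comp a b * comp a' b') :
    ∀ (k k' : G₁) (g g' : G₀), s k = 1 → s k' = 1 → g = t k' * g' →
      comp (k * i g) (k' * i g') = (k * k') * i g' := by
  intro k k' g g' hk hk' hg
  subst hg
  have h1 : k * i (t k' * g') = (k * i (t k')) * i g' := by
    rw [map_mul, mul_assoc]
  rw [h1]
  have h2 : comp ((k * i (t k')) * i g') (k' * i g') =
      comp (k * i (t k')) k' * comp (i g') (i g') := by
    apply hint
    · simp [map_mul, hk, hsi]
    · simp [hsi, hti]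
  rw [h2]
  have h3 : comp (i g') (i g') = i g' := by
    have := hidl (i g'); rwa [hti] at this
  have h4 : comp (k * i (t k')) k' = k * k' := by
    have : comp (k * i (t k')) (i (s k) * k') = comp k (i (s k)) * comp (i (t k')) k' := by
      apply hint
      · rw [hti]
      · rw [hsi]
    rw [hidr k, hidl k', hk, map_one, one_mul] at this
    exact this
  rw [h3, h4]
end

section
/- For 2-morphisms η : (γ,δ) ⇒ (Γ,Δ) between crossed modules χ → χ' and η' : (γ',δ') ⇒ (Γ',Δ') between χ' → χ'', the two candidate formulas for horizontal composition agree: Δ'(η(g))·η'(γ(g)) = η'(Γ(g))·δ'(η(g)) for all g ∈ G. -/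
/-- For 2-morphisms `η : (γ,δ) ⇒ (Γ,Δ) : χ → χ'` and `η' : (γ',δ') ⇒ (Γ',Δ') : χ' → χ''`,
the two candidate formulas for horizontal composition agree:
`Δ'(η g) * η'(γ g) = η'(Γ g) * δ'(η g)` for all `g ∈ G`. -/
theorem crossed_module_horizontal_formulas_agree
    {G H G' H' G'' H'' : Type*} [Group G] [Group H] [Group G'] [Group H']
    [Group G''] [Group H'']
    (τ : H →* G) (α : G →* MulAut H)
    (τ' : H' →* G') (α' : G' →* MulAut H')
    (τ'' : H'' →* G'') (α'' : G'' →* MulAut H'')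
    (hequiv : ∀ g h, τ (α g h) = g * τ h * g⁻¹)
    (hpeif : ∀ h h', α (τ h) h' = h * h' * h⁻¹)
    (hequiv' : ∀ g h, τ' (α' g h) = g * τ' h * g⁻¹)
    (hpeif' : ∀ h h', α' (τ' h) h' = h * h' * h⁻¹)
    (hequiv'' : ∀ g h, τ'' (α'' g h) = g * τ'' h * g⁻¹)
    (hpeif'' : ∀ h h', α'' (τ'' h) h' = h * h' * h⁻¹)
    (γ Γ : G →* G') (δ Δ : H →* H')
    (hmor1 : ∀ h, τ' (δ h) = γ (τ h)) (hmor2 : ∀ g h, δ (α g h) = α' (γ g) (δ h))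
    (hMor1 : ∀ h, τ' (Δ h) = Γ (τ h)) (hMor2 : ∀ g h, Δ (α g h) = α' (Γ g) (Δ h))
    (γ' Γ' : G' →* G'') (δ' Δ' : H' →* H'')
    (hmor1' : ∀ h, τ'' (δ' h) = γ' (τ' h)) (hmor2' : ∀ g h, δ' (α' g h) = α'' (γ' g) (δ' h))
    (hMor1' : ∀ h, τ'' (Δ' h) = Γ' (τ' h)) (hMor2' : ∀ g h, Δ' (α' g h) = α'' (Γ' g) (Δ' h))
    (η : G → H') (η' : G' → H'')
    (hη1 : ∀ g g', η (g * g') = η g * α' (γ g) (η g'))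
    (hη2 : ∀ g, τ' (η g) = Γ g * (γ g)⁻¹)
    (hη3 : ∀ h, η (τ h) = Δ h * (δ h)⁻¹)
    (hη'1 : ∀ g g', η' (g * g') = η' g * α'' (γ' g) (η' g'))
    (hη'2 : ∀ g, τ'' (η' g) = Γ' g * (γ' g)⁻¹)
    (hη'3 : ∀ h, η' (τ' h) = Δ' h * (δ' h)⁻¹) :
    ∀ g : G, Δ' (η g) * η' (γ g) = η' (Γ g) * δ' (η g) := by
  intro g
  have h1 : Γ g = τ' (η g) * γ g := by
    rw [hη2]; group
  rw [h1, hη'1, hη'3, ← hmor1', hpeif'']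
  group
end

section
/- The horizontal composition (η' ∘ η)(g) = Δ'(η(g))·η'(γ(g)) of crossed-module 2-morphisms η : (γ,δ) ⇒ (Γ,Δ) : χ → χ' and η' : (γ',δ') ⇒ (Γ',Δ') : χ' → χ'' is a 2-morphism from (γ'∘γ, δ'∘δ) to (Γ'∘Γ, Δ'∘Δ): it satisfies (η'∘η)(gg̃) = (η'∘η)(g)·α''(γ'γg, (η'∘η)(g̃)), τ''((η'∘η)(g)) = Γ'Γ(g)·(γ'γ(g))⁻¹, and (η'∘η)(τ(h)) = Δ'Δ(h)·(δ'δ(h))⁻¹. -/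
/-- The horizontal composition `(η' ∘ η)(g) = Δ'(η g) * η'(γ g)` of crossed-module
2-morphisms `η : (γ,δ) ⇒ (Γ,Δ) : χ → χ'` and `η' : (γ',δ') ⇒ (Γ',Δ') : χ' → χ''` is a
2-morphism from `(γ'∘γ, δ'∘δ)` to `(Γ'∘Γ, Δ'∘Δ)`: the crossed homomorphism condition
and the two chain homotopy conditions hold. -/
theorem crossed_module_horizontal_composition
    {G H G' H' G'' H'' : Type*} [Group G] [Group H] [Group G'] [Group H']
    [Group G''] [Group H'']
    (τ : H →* G) (α : G →* MulAut H)
    (τ' : H' →* G') (α' : G' →* MulAut H')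
    (τ'' : H'' →* G'') (α'' : G'' →* MulAut H'')
    (hequiv : ∀ g h, τ (α g h) = g * τ h * g⁻¹)
    (hpeif : ∀ h h', α (τ h) h' = h * h' * h⁻¹)
    (hequiv' : ∀ g h, τ' (α' g h) = g * τ' h * g⁻¹)
    (hpeif' : ∀ h h', α' (τ' h) h' = h * h' * h⁻¹)
    (hequiv'' : ∀ g h, τ'' (α'' g h) = g * τ'' h * g⁻¹)
    (hpeif'' : ∀ h h', α'' (τ'' h) h' = h * h' * h⁻¹)
    (γ Γ : G →* G') (δ Δ : H →* H')
    (hmor1 : ∀ h, τ' (δ h) = γ (τ h)) (hmor2 : ∀ g h, δ (α g h) = α' (γ g) (δ h))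
    (hMor1 : ∀ h, τ' (Δ h) = Γ (τ h)) (hMor2 : ∀ g h, Δ (α g h) = α' (Γ g) (Δ h))
    (γ' Γ' : G' →* G'') (δ' Δ' : H' →* H'')
    (hmor1' : ∀ h, τ'' (δ' h) = γ' (τ' h)) (hmor2' : ∀ g h, δ' (α' g h) = α'' (γ' g) (δ' h))
    (hMor1' : ∀ h, τ'' (Δ' h) = Γ' (τ' h)) (hMor2' : ∀ g h, Δ' (α' g h) = α'' (Γ' g) (Δ' h))
    (η : G → H') (η' : G' → H'')
    (hη1 : ∀ g g', η (g * g') = η g * α' (γ g) (η g'))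
    (hη2 : ∀ g, τ' (η g) = Γ g * (γ g)⁻¹)
    (hη3 : ∀ h, η (τ h) = Δ h * (δ h)⁻¹)
    (hη'1 : ∀ g g', η' (g * g') = η' g * α'' (γ' g) (η' g'))
    (hη'2 : ∀ g, τ'' (η' g) = Γ' g * (γ' g)⁻¹)
    (hη'3 : ∀ h, η' (τ' h) = Δ' h * (δ' h)⁻¹) :
    (∀ g g' : G, Δ' (η (g * g')) * η' (γ (g * g'))
      = (Δ' (η g) * η' (γ g)) * α'' (γ' (γ g)) (Δ' (η g') * η' (γ g'))) ∧
    (∀ g : G, τ'' (Δ' (η g) * η' (γ g)) = Γ' (Γ g) * (γ' (γ g))⁻¹) ∧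
    (∀ h : H, Δ' (η (τ h)) * η' (γ (τ h)) = Δ' (Δ h) * (δ' (δ h))⁻¹) := by
  refine ⟨fun g g' => ?_, fun g => ?_, fun h => ?_⟩
  · have key : Δ' (α' (γ g) (η g')) * η' (γ g)
        = η' (γ g) * α'' (γ' (γ g)) (Δ' (η g')) := by
      have h1 : Δ' (α' (γ g) (η g')) = α'' (Γ' (γ g)) (Δ' (η g')) := hMor2' _ _
      have h2 : Γ' (γ g) = τ'' (η' (γ g)) * γ' (γ g) := by
        rw [hη'2]; group
      rw [h1, h2, map_mul, MulAut.mul_apply, hpeif'']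
      group
    calc Δ' (η (g * g')) * η' (γ (g * g'))
        = Δ' (η g) * (Δ' (α' (γ g) (η g')) * η' (γ g))
            * α'' (γ' (γ g)) (η' (γ g')) := by
          rw [hη1, map_mul, map_mul, hη'1]; group
      _ = _ := by rw [key, map_mul]; group
  · rw [map_mul, hMor1', hη2, hη'2, map_mul, map_inv]; group
  · rw [hη3, ← hmor1, hη'3, map_mul, map_inv]; group
end

section
/- Given a natural transformation θ : F ⇒ E between morphisms F = (f₀,f₁), E = (e₀,e₁) of strict 2-groups 𝔾 → 𝔾' (i.e. θ : G₀ → G₁' a group homomorphism satisfying the naturality conditions), the map η(g) = θ(g)·i'(s'(θ(g)))⁻¹ : G₀ → ker s' is a 2-morphism of the associated crossed modules: it satisfies η(g·g̃) = η(g)·α'(f₀(g), η(g̃)), t'(η(g)) = e₀(g)·f₀(g)⁻¹, and η(t(h)) = e₁(h)·f₁(h)⁻¹ for h ∈ ker s. -/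
/-- A natural transformation `θ : F ⇒ E` between morphisms of strict 2-groups gives a
2-morphism of the associated crossed modules via `η g = θ g * i' (s' (θ g))⁻¹`:
`η` takes values in `ker s'`, satisfies the crossed homomorphism condition with respect
to the action `α'(g, h) = i' g * h * (i' g)⁻¹`, and the two chain homotopy conditions. -/
theorem strict_two_group_two_morphism_gives_crossed_module_two_morphism
    {G₀ G₁ G₀' G₁' : Type*} [Group G₀] [Group G₁] [Group G₀'] [Group G₁']
    (s t : G₁ →* G₀) (i : G₀ →* G₁)
    (hsi : ∀ g, s (i g) = g) (hti : ∀ g, t (i g) = g)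
    (comp : G₁ → G₁ → G₁)
    (s' t' : G₁' →* G₀') (i' : G₀' →* G₁')
    (hsi' : ∀ g, s' (i' g) = g) (hti' : ∀ g, t' (i' g) = g)
    (comp' : G₁' → G₁' → G₁')
    (hscomp' : ∀ a b, s' a = t' b → s' (comp' a b) = s' b)
    (htcomp' : ∀ a b, s' a = t' b → t' (comp' a b) = t' a)
    (hidr' : ∀ a, comp' a (i' (s' a)) = a)
    (hidl' : ∀ a, comp' (i' (t' a)) a = a)
    (hassoc' : ∀ a b c, s' a = t' b → s' b = t' c →
      comp' (comp' a b) c = comp' a (comp' b c))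
    (hint' : ∀ a a' b b', s' a = t' b → s' a' = t' b' →
      comp' (a * a') (b * b') = comp' a b * comp' a' b')
    (f₀ e₀ : G₀ →* G₀') (f₁ e₁ : G₁ →* G₁')
    (hfs : ∀ a, s' (f₁ a) = f₀ (s a)) (hft : ∀ a, t' (f₁ a) = f₀ (t a))
    (hfi : ∀ g, f₁ (i g) = i' (f₀ g))
    (hfc : ∀ a b, s a = t b → f₁ (comp a b) = comp' (f₁ a) (f₁ b))
    (hes : ∀ a, s' (e₁ a) = e₀ (s a)) (het : ∀ a, t' (e₁ a) = e₀ (t a))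
    (hei : ∀ g, e₁ (i g) = i' (e₀ g))
    (hec : ∀ a b, s a = t b → e₁ (comp a b) = comp' (e₁ a) (e₁ b))
    (θ : G₀ →* G₁')
    (hθs : ∀ g, s' (θ g) = f₀ g) (hθt : ∀ g, t' (θ g) = e₀ g)
    (hθnat : ∀ a : G₁, comp' (θ (t a)) (f₁ a) = comp' (e₁ a) (θ (s a))) :
    let η : G₀ → G₁' := fun g => θ g * (i' (s' (θ g)))⁻¹
    (∀ g : G₀, s' (η g) = 1) ∧
    (∀ g g' : G₀, η (g * g') = η g * (i' (f₀ g) * η g' * (i' (f₀ g))⁻¹)) ∧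
    (∀ g : G₀, t' (η g) = e₀ g * (f₀ g)⁻¹) ∧
    (∀ h : G₁, h ∈ s.ker → η (t h) = e₁ h * (f₁ h)⁻¹) := by
  intro η
  have key : ∀ a b : G₁', s' a = t' b → comp' a b = a * (i' (s' a))⁻¹ * b := by
    intro a b hab
    have h1 : comp' (a * 1) (i' (s' a) * ((i' (s' a))⁻¹ * b)) =
        comp' a (i' (s' a)) * comp' 1 ((i' (s' a))⁻¹ * b) :=
      hint' _ _ _ _ ((hti' _).symm) (by simp [map_mul, map_inv, hti', hab])
    have h2 : comp' 1 ((i' (s' a))⁻¹ * b) = (i' (s' a))⁻¹ * b := by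
      have := hidl' ((i' (s' a))⁻¹ * b)
      simpa [map_mul, map_inv, hti', hab] using this
    simpa [hidr', h2, mul_assoc] using h1
  refine ⟨?_, ?_, ?_, ?_⟩
  · intro g
    simp [η, map_mul, map_inv, hsi']
  · intro g g'
    simp only [η, hθs, map_mul, map_inv, mul_inv_rev]
    group
  · intro g
    simp [η, map_mul, map_inv, hti', hθt, hθs]
  · intro h hh
    have hsh : s h = 1 := hh
    have hnat := hθnat h
    have h1 : comp' (e₁ h) (θ (s h)) = e₁ h := by
      rw [hsh, map_one]
      simpa [hes, hsh] using hidr' (e₁ h)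
    have h2 : comp' (θ (t h)) (f₁ h) = θ (t h) * (i' (s' (θ (t h))))⁻¹ * f₁ h :=
      key _ _ (by rw [hθs, hft])
    have h3 : θ (t h) * (i' (s' (θ (t h))))⁻¹ * f₁ h = e₁ h := by
      rw [← h2, hnat, h1]
    show θ (t h) * (i' (s' (θ (t h))))⁻¹ = e₁ h * (f₁ h)⁻¹
    rw [← h3]; group
end

section
/- Given a crossed-module 2-morphism η : (γ,δ) ⇒ (Γ,Δ), the map θ(g) = (η(g), γ(g)) : G → H' ⋊ G' is an internal natural transformation between the induced 2-group morphisms: for every morphism (h,g) in H ⋊ G with source g and target ḡ = τ(h)·g, the naturality square commutes, i.e. θ(ḡ) ∘ (δ(h), γ(g)) = (Δ(h), Γ(g)) ∘ θ(g) in the 2-group H' ⋊ G'. -/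
/-- A crossed-module 2-morphism `η : (γ,δ) ⇒ (Γ,Δ)` induces an internal natural
transformation `θ g = (η g, γ g)` between the induced 2-group morphisms: for every
morphism `(h, g)` of `H ⋊[α] G` with source `g` and target `ḡ = τ h * g`, the
naturality square commutes: `θ ḡ ∘ (δ h, γ g) = (Δ h, Γ g) ∘ θ g` in `H' ⋊[α'] G'`,
where `a ∘ b = (a.left * b.left, b.right)`. -/
theorem crossed_module_two_morphism_gives_natural_transformation
    {G H G' H' : Type*} [Group G] [Group H] [Group G'] [Group H']
    (τ : H →* G) (α : G →* MulAut H)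
    (τ' : H' →* G') (α' : G' →* MulAut H')
    (hequiv : ∀ g h, τ (α g h) = g * τ h * g⁻¹)
    (hpeif : ∀ h h', α (τ h) h' = h * h' * h⁻¹)
    (hequiv' : ∀ g h, τ' (α' g h) = g * τ' h * g⁻¹)
    (hpeif' : ∀ h h', α' (τ' h) h' = h * h' * h⁻¹)
    (γ Γ : G →* G') (δ Δ : H →* H')
    (hmor1 : ∀ h, τ' (δ h) = γ (τ h)) (hmor2 : ∀ g h, δ (α g h) = α' (γ g) (δ h))
    (hMor1 : ∀ h, τ' (Δ h) = Γ (τ h)) (hMor2 : ∀ g h, Δ (α g h) = α' (Γ g) (Δ h))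
    (η : G → H')
    (hη1 : ∀ g g', η (g * g') = η g * α' (γ g) (η g'))
    (hη2 : ∀ g, τ' (η g) = Γ g * (γ g)⁻¹)
    (hη3 : ∀ h, η (τ h) = Δ h * (δ h)⁻¹) :
    let C : H' ⋊[α'] G' → H' ⋊[α'] G' → H' ⋊[α'] G' :=
      fun a b => ⟨a.left * b.left, b.right⟩
    ∀ (h : H) (g : G),
      C ⟨η (τ h * g), γ (τ h * g)⟩ ⟨δ h, γ g⟩
        = C ⟨Δ h, Γ g⟩ ⟨η g, γ g⟩ := by
  intro C h g
  have key : η (τ h * g) * δ h = Δ h * η g := by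
    rw [hη1, hη3, ← hmor1, hpeif']
    group
  show (⟨_ * _, _⟩ : H' ⋊[α'] G') = ⟨_ * _, _⟩
  rw [key]
end

section
/- Composing the two constructions on objects yields an isomorphism: for any strict 2-group 𝔾 = (G₀, G₁, s, t, i, ∘), the pair (id_{G₀}, φ⁻¹) where φ⁻¹ : ker(s) ⋊ G₀ → G₁, (h,g) ↦ h·i(g), is an isomorphism of strict 2-groups from the 2-group (G₀, ker s ⋊ G₀, π₂, (h,g) ↦ t(h)·g, g ↦ (e,g)) built from the crossed module of 𝔾 back to 𝔾; i.e. φ⁻¹ is a group isomorphism intertwining source, target, identity and composition. -/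
/-- Round trip on strict 2-groups: for a strict 2-group `𝔾 = (G₀, G₁, s, t, i, ∘)`,
the map `φ⁻¹ : ker s ⋊ G₀ → G₁`, `(h, g) ↦ h * i g`, is a group isomorphism from the
2-group built out of the crossed module of `𝔾` (with source `(h,g) ↦ g`, target
`(h,g) ↦ t h * g`, identities `g ↦ (1,g)` and composition
`(p, q) ↦ (p.left * q.left, q.right)`) back to `𝔾`, intertwining source, target,
identity and composition. -/
theorem strict_two_group_round_trip
    {G₀ G₁ : Type*} [Group G₀] [Group G₁]
    (s t : G₁ →* G₀) (i : G₀ →* G₁)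
    (hsi : ∀ g, s (i g) = g) (hti : ∀ g, t (i g) = g)
    (comp : G₁ → G₁ → G₁)
    (hscomp : ∀ a b, s a = t b → s (comp a b) = s b)
    (htcomp : ∀ a b, s a = t b → t (comp a b) = t a)
    (hidr : ∀ a, comp a (i (s a)) = a)
    (hidl : ∀ a, comp (i (t a)) a = a)
    (hassoc : ∀ a b c, s a = t b → s b = t c → comp (comp a b) c = comp a (comp b c))
    (hint : ∀ a a' b b', s a = t b → s a' = t b' →
      comp (a * a') (b * b') = comp a b * comp a' b') :
    ∃ e : (s.ker ⋊[(MulAut.conjNormal : G₁ →* MulAut s.ker).comp i] G₀) ≃* G₁,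
      (∀ p, e p = (p.left : G₁) * i p.right) ∧
      -- intertwines sources
      (∀ p, s (e p) = p.right) ∧
      -- intertwines targets
      (∀ p, t (e p) = t (p.left : G₁) * p.right) ∧
      -- intertwines identities
      (∀ g : G₀, e ⟨1, g⟩ = i g) ∧
      -- intertwines compositions on composable pairs
      (∀ p q, p.right = t (q.left : G₁) * q.right →
        e ⟨p.left * q.left, q.right⟩ = comp (e p) (e q)) := by

  -- key lemma: composition is determined by the group structure
  have key : ∀ a b : G₁, s a = t b → comp a b = a * (i (s a))⁻¹ * b := by
    intro a b hab
    have h1 : t ((i (s a))⁻¹ * b) = 1 := by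
      simp [hti, hab]
    have h2 : comp 1 ((i (s a))⁻¹ * b) = (i (s a))⁻¹ * b := by
      have := hidl ((i (s a))⁻¹ * b)
      rwa [h1, map_one] at this
    have h3 := hint a 1 (i (s a)) ((i (s a))⁻¹ * b) (by rw [hti]) (by simp [h1])
    rw [mul_one, mul_inv_cancel_left] at h3
    rw [h3, hidr, h2, mul_assoc]
  refine ⟨{
    toFun := fun p => (p.left : G₁) * i p.right
    invFun := fun a => ⟨⟨a * (i (s a))⁻¹, by simp [MonoidHom.mem_ker, hsi]⟩, s a⟩
    left_inv := by
      intro p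
      have hl : s (p.left : G₁) = 1 := p.left.2
      ext
      · simp [hl, hsi]
      · simp [hl, hsi]
    right_inv := by
      intro a
      simp
    map_mul' := by
      intro p q
      simp only [SemidirectProduct.mul_left, SemidirectProduct.mul_right,
        MonoidHom.comp_apply, map_mul]
      push_cast [MulAut.conjNormal_apply]
      group
  }, ?_, ?_, ?_, ?_, ?_⟩
  · intro p; rfl
  · intro p
    have hl : s (p.left : G₁) = 1 := p.left.2
    simp [hl, hsi]
  · intro p
    simp [hti]
  · intro g
    show ((1 : s.ker) : G₁) * i g = i g
    simp
  · intro p q hpq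
    have hsrc : s ((p.left : G₁) * i p.right) = p.right := by
      have hl : s (p.left : G₁) = 1 := p.left.2
      simp [hl, hsi]
    have htgt : t ((q.left : G₁) * i q.right) = t (q.left : G₁) * q.right := by
      simp [hti]
    show ((p.left * q.left : s.ker) : G₁) * i q.right
      = comp ((p.left : G₁) * i p.right) ((q.left : G₁) * i q.right)
    rw [key _ _ (by rw [hsrc, htgt, hpq]), hsrc]
    push_cast
    group
end

section
/- For any crossed module χ = (G, H, τ, α), passing to its associated 2-group (G, H ⋊ G, π₂, τπ₁·π₂, i₂) and back to a crossed module yields (G, ker π₂, τ∘π₁|_{ker π₂}, Ad_{i₂}), and the pair (id_G, π₁|_{ker π₂}) is an isomorphism of crossed modules from this to χ: π₁|_{ker π₂} : ker π₂ → H is a group isomorphism with τ∘π₁ = τ∘(π₁|_{ker π₂}) and π₁((e,g)·(h,e)·(e,g)⁻¹) = α(g, π₁(h,e)). -/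
/-- Round trip on crossed modules: for a crossed module `χ = (G, H, τ, α)`, the crossed
module of the 2-group `(G, H ⋊[α] G, π₂, τπ₁·π₂, i₂)` is `(G, ker π₂, τ∘π₁, Ad_{i₂})`
and `(id_G, π₁|_{ker π₂})` is an isomorphism of crossed modules back to `χ`: `π₁`
restricts to a group isomorphism `ker π₂ ≃* H` intertwining the boundary maps and
intertwining conjugation by `i₂ g = (1, g)` with the action `α`. -/
theorem crossed_module_round_trip
    {G H : Type*} [Group G] [Group H]
    (τ : H →* G) (α : G →* MulAut H)
    (hequiv : ∀ g h, τ (α g h) = g * τ h * g⁻¹)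
    (hpeif : ∀ h h', α (τ h) h' = h * h' * h⁻¹) :
    ∃ e : (SemidirectProduct.rightHom : H ⋊[α] G →* G).ker ≃* H,
      -- e is the restriction of the first projection π₁
      (∀ p, e p = (p : H ⋊[α] G).left) ∧
      -- it intertwines the boundary maps: τ' = (τ∘π₁)|_{ker π₂} corresponds to τ
      (∀ p : (SemidirectProduct.rightHom : H ⋊[α] G →* G).ker,
        τ ((p : H ⋊[α] G).left) * (p : H ⋊[α] G).right = τ (e p)) ∧
      -- conjugation by i₂ g = (1, g) corresponds to the action α
      (∀ (g : G) (h : H),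
        ((⟨1, g⟩ : H ⋊[α] G) * ⟨h, 1⟩ * (⟨1, g⟩ : H ⋊[α] G)⁻¹).left = α g h) := by
  have hker : ∀ p : (SemidirectProduct.rightHom : H ⋊[α] G →* G).ker,
      (p : H ⋊[α] G).right = 1 := fun p => p.2
  refine ⟨{ toFun := fun p => (p : H ⋊[α] G).left
            invFun := fun h => ⟨⟨h, 1⟩, by simp [MonoidHom.mem_ker]⟩
            left_inv := ?_
            right_inv := fun h => rfl
            map_mul' := ?_ }, fun p => rfl, ?_, ?_⟩
  · rintro ⟨⟨h, g⟩, hg⟩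
    simp only [MonoidHom.mem_ker, SemidirectProduct.rightHom_eq_right] at hg
    subst hg
    rfl
  · intro p q
    show ((p : H ⋊[α] G) * q).left = _
    rw [SemidirectProduct.mul_left, hker p]
    simp
  · intro p
    rw [hker p]
    simp
  · intro g h
    simp
end
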